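/- Given probability vectors f_ρ, f_γ on {1,…,d}, a vector x with x·1 = 0, ε > 0, and ν defined by (1+1/ε)·ν = f_ρ + (1/ε)·f_γ − x, the first-order expansion in ε holds: (1+ε)·H(ν) = H(f_γ) + ε·[−(f_ρ − x)·log f_γ] + O(ε²) when rewritten per reservoir copy, so that the unitarity condition ε·H(f_ρ) + H(f_γ) ≤ (1+ε)·H(ν) is, to first order in ε, equivalent to −x·log f_γ ≤ D(f_ρ ‖ f_γ) + O(ε), where H is Shannon entropy and D classical relative entropy. -/

import Mathlib

open scoped ComplexOrder Kronecker

noncomputable def matLog {n : Type*} [Fintype n] [DecidableEq n]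
    (A : Matrix n n ℂ) : Matrix n n ℂ := cfc Real.log A

noncomputable def vnEntropy {n : Type*} [Fintype n] [DecidableEq n]
    (ρ : Matrix n n ℂ) : ℝ := -((ρ * matLog ρ).trace.re)

noncomputable def relEnt {n : Type*} [Fintype n] [DecidableEq n]
    (ρ σ : Matrix n n ℂ) : ℝ := ((ρ * (matLog ρ - matLog σ)).trace).re

def IsDensityMatrix {n : Type*} [Fintype n] [DecidableEq n]
    (ρ : Matrix n n ℂ) : Prop := ρ.PosSemidef ∧ ρ.trace = 1

noncomputable def traceNorm {n : Type*} [Fintype n] [DecidableEq n]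
    (A : Matrix n n ℂ) : ℝ := (cfc (fun x : ℝ => |x|) A).trace.re

noncomputable def gibbs {n : Type*} [Fintype n] [DecidableEq n] (β : ℝ)
    (H : Matrix n n ℂ) : Matrix n n ℂ :=
  (NormedSpace.exp ((-(β:ℂ)) • H)).trace⁻¹ • NormedSpace.exp ((-(β:ℂ)) • H)

noncomputable def binEnt (x : ℝ) : ℝ := -(x * Real.log x) - (1 - x) * Real.log (1 - x)

lemma phi_lower {t : ℝ} (ht : -1 < t) : t ≤ (1+t) * Real.log (1+t) := by
  have hpos : (0:ℝ) < 1 + t := by linarith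
  have h := Real.log_le_sub_one_of_pos (inv_pos.mpr hpos)
  rw [Real.log_inv] at h
  have hinv : (1+t) * (1+t)⁻¹ = 1 := mul_inv_cancel₀ hpos.ne'
  nlinarith [mul_le_mul_of_nonneg_left h hpos.le]

lemma phi_upper {t : ℝ} (ht : -1 < t) : (1+t) * Real.log (1+t) ≤ t + t^2 := by
  have hpos : (0:ℝ) < 1 + t := by linarith
  have h := Real.log_le_sub_one_of_pos hpos
  nlinarith [mul_le_mul_of_nonneg_left h hpos.le]

lemma term_bound {a b ε : ℝ} (ha : 0 < a) (hg : 0 < a + ε*b) :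
    0 ≤ (a+ε*b) * Real.log (a+ε*b) - a * Real.log a - ε*b*(Real.log a + 1) ∧
    (a+ε*b) * Real.log (a+ε*b) - a * Real.log a - ε*b*(Real.log a + 1) ≤ ε^2*b^2/a := by
  set t : ℝ := ε*b/a with htdef
  have ht : -1 < t := by
    rw [htdef, lt_div_iff₀ ha]; linarith
  have hab : a + ε*b = a * (1+t) := by rw [htdef]; field_simp
  have h1t : (0:ℝ) < 1 + t := by linarith
  have hlog : Real.log (a+ε*b) = Real.log a + Real.log (1+t) := by
    rw [hab, Real.log_mul ha.ne' h1t.ne']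
  have hεb : ε*b = a*t := by rw [htdef]; field_simp
  have hkey : (a+ε*b) * Real.log (a+ε*b) - a * Real.log a - ε*b*(Real.log a + 1)
      = a * ((1+t) * Real.log (1+t) - t) := by
    rw [hlog, hab, hεb]; ring
  have ht2 : a * t^2 = ε^2*b^2/a := by rw [htdef]; field_simp
  constructor
  · rw [hkey]; nlinarith [phi_lower ht]
  · rw [hkey, ← ht2]; nlinarith [phi_upper ht]

/-- Shannon entropy (in nats) of a vector. -/
noncomputable def shannonEntropy {d : ℕ} (f : Fin d → ℝ) : ℝ :=
  -∑ i, f i * Real.log (f i)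

/-- Classical relative entropy D(f‖g) = Σᵢ fᵢ log(fᵢ/gᵢ). -/
noncomputable def classRelEnt {d : ℕ} (f g : Fin d → ℝ) : ℝ :=
  ∑ i, f i * Real.log (f i / g i)

/-- First-order expansion of the unitarity condition: with
ν = (ε f_ρ + f_γ − ε x)/(1+ε), one has
(1+ε)H(ν) = H(f_γ) + ε·[−(f_ρ−x)·log f_γ] + O(ε²), so to first order in ε the
condition ε·H(f_ρ) + H(f_γ) ≤ (1+ε)·H(ν) is equivalent to −x·log f_γ ≤ D(f_ρ‖f_γ). -/
theorem unitarity_first_order_expansion {d : ℕ}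
    (fρ fγ x : Fin d → ℝ)
    (hfρ0 : ∀ i, 0 ≤ fρ i) (hfρ1 : ∑ i, fρ i = 1)
    (hfγpos : ∀ i, 0 < fγ i) (hfγ1 : ∑ i, fγ i = 1)
    (hx : ∑ i, x i = 0)
    (ν : ℝ → Fin d → ℝ)
    (hν : ∀ ε i, ν ε i = (ε * fρ i + fγ i - ε * x i) / (1 + ε)) :
    ∃ C > 0, ∃ ε₀ > 0, ∀ ε : ℝ, 0 < ε → ε ≤ ε₀ →
      (|(1 + ε) * shannonEntropy (ν ε) - shannonEntropy fγ
          - ε * (-∑ i, (fρ i - x i) * Real.log (fγ i))| ≤ C * ε ^ 2) ∧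
      ((ε * shannonEntropy fρ + shannonEntropy fγ ≤ (1 + ε) * shannonEntropy (ν ε)) →
        -∑ i, x i * Real.log (fγ i) ≤ classRelEnt fρ fγ + C * ε) ∧
      ((-∑ i, x i * Real.log (fγ i)) + C * ε ≤ classRelEnt fρ fγ →
        ε * shannonEntropy fρ + shannonEntropy fγ ≤ (1 + ε) * shannonEntropy (ν ε)) := by
  set b : Fin d → ℝ := fun i => fρ i - x i with hb
  have hbsum : ∑ i, b i = 1 := by
    simp only [hb, Finset.sum_sub_distrib, hfρ1, hx, sub_zero]
  set Q : ℝ := ∑ i, (b i)^2 / fγ i with hQ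
  have hQ0 : 0 ≤ Q :=
    Finset.sum_nonneg fun i _ => div_nonneg (sq_nonneg _) (hfγpos i).le
  set S : ℝ := ∑ i, |b i| / fγ i with hSdef
  have hS0 : 0 ≤ S :=
    Finset.sum_nonneg fun i _ => div_nonneg (abs_nonneg _) (hfγpos i).le
  have h1S : (0:ℝ) < 1 + S := by linarith
  clear_value b Q S
  refine ⟨1 + Q, by linarith, 1/(1+S), by positivity, ?_⟩
  intro ε hε hεle
  have hg : ∀ i, 0 < fγ i + ε * b i := by
    intro i
    have h1 : |b i| / fγ i ≤ S := by
      rw [hSdef]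
      exact Finset.single_le_sum (f := fun j => |b j| / fγ j)
        (fun j _ => div_nonneg (abs_nonneg _) (hfγpos j).le) (Finset.mem_univ i)
    have hfi := hfγpos i
    have h2 : |b i| ≤ S * fγ i := by
      rw [div_le_iff₀ hfi] at h1; linarith
    have h3 : ε * (1 + S) ≤ 1 := by
      have := mul_le_mul_of_nonneg_right hεle h1S.le
      rwa [one_div, inv_mul_cancel₀ h1S.ne'] at this
    have h4 : ε * |b i| < fγ i := by nlinarith [abs_nonneg (b i)]
    have := neg_abs_le (b i)
    nlinarith
  have h1ε : (0:ℝ) < 1 + ε := by linarith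
  have hνeq : ∀ i, ν ε i = (fγ i + ε * b i) / (1 + ε) := by
    intro i; rw [hν]; congr 1; simp only [hb]; ring
  have hgsum : ∑ i, (fγ i + ε * b i) = 1 + ε := by
    rw [Finset.sum_add_distrib, hfγ1, ← Finset.mul_sum, hbsum, mul_one]
  have hid : (1 + ε) * shannonEntropy (ν ε)
      = -∑ i, (fγ i + ε * b i) * Real.log (fγ i + ε * b i)
        + (1 + ε) * Real.log (1 + ε) := by
    have step : ∀ i ∈ Finset.univ, (1+ε) * (ν ε i * Real.log (ν ε i))
        = (fγ i + ε * b i) * Real.log (fγ i + ε * b i)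
          - (fγ i + ε * b i) * Real.log (1+ε) := by
      intro i _
      rw [hνeq i, Real.log_div (hg i).ne' h1ε.ne']
      field_simp
    rw [shannonEntropy, mul_neg, Finset.mul_sum, Finset.sum_congr rfl step,
      Finset.sum_sub_distrib, ← Finset.sum_mul, hgsum]
    ring
  have hsum1 : 0 ≤ ∑ i, ((fγ i + ε * b i) * Real.log (fγ i + ε * b i)
      - fγ i * Real.log (fγ i) - ε * b i * (Real.log (fγ i) + 1)) :=
    Finset.sum_nonneg fun i _ => (term_bound (hfγpos i) (hg i)).1
  have hsum2 : ∑ i, ((fγ i + ε * b i) * Real.log (fγ i + ε * b i)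
      - fγ i * Real.log (fγ i) - ε * b i * (Real.log (fγ i) + 1)) ≤ ε^2 * Q := by
    rw [hQ, Finset.mul_sum]
    exact Finset.sum_le_sum fun i _ => by
      have h := (term_bound (hfγpos i) (hg i)).2
      calc _ ≤ ε^2 * (b i)^2 / fγ i := h
        _ = ε^2 * ((b i)^2 / fγ i) := by ring
  have hTexp : ∑ i, ((fγ i + ε * b i) * Real.log (fγ i + ε * b i)
      - fγ i * Real.log (fγ i) - ε * b i * (Real.log (fγ i) + 1))
      = ∑ i, (fγ i + ε * b i) * Real.log (fγ i + ε * b i)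
        - ∑ i, fγ i * Real.log (fγ i) - ε * (∑ i, b i * Real.log (fγ i)) - ε := by
    rw [Finset.sum_sub_distrib, Finset.sum_sub_distrib]
    have haux : ∑ i, ε * b i * (Real.log (fγ i) + 1)
        = ε * (∑ i, b i * Real.log (fγ i)) + ε * ∑ i, b i := by
      rw [Finset.mul_sum, Finset.mul_sum, ← Finset.sum_add_distrib]
      exact Finset.sum_congr rfl fun i _ => by ring
    rw [haux, hbsum]; ring
  have hφ1 : ε ≤ (1+ε) * Real.log (1+ε) := phi_lower (by linarith)
  have hφ2 : (1+ε) * Real.log (1+ε) ≤ ε + ε^2 := phi_upper (by linarith)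
  have hL : (∑ i, (fρ i - x i) * Real.log (fγ i)) = ∑ i, b i * Real.log (fγ i) := by
    simp only [hb]
  have hmain : (1 + ε) * shannonEntropy (ν ε) - shannonEntropy fγ
      - ε * (-∑ i, (fρ i - x i) * Real.log (fγ i))
      = -(∑ i, ((fγ i + ε * b i) * Real.log (fγ i + ε * b i)
          - fγ i * Real.log (fγ i) - ε * b i * (Real.log (fγ i) + 1)))
        + ((1+ε) * Real.log (1+ε) - ε) := by
    rw [hid, hL, hTexp, shannonEntropy]; ring
  have hεQ : ε^2 * Q ≤ (1 + Q) * ε^2 := by nlinarith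
  have hε2 : ε^2 ≤ (1 + Q) * ε^2 := by nlinarith
  have hD : classRelEnt fρ fγ
      = ∑ i, fρ i * Real.log (fρ i) - ∑ i, fρ i * Real.log (fγ i) := by
    rw [classRelEnt, ← Finset.sum_sub_distrib]
    refine Finset.sum_congr rfl fun i _ => ?_
    rcases (hfρ0 i).eq_or_lt with h | h
    · simp [← h]
    · rw [Real.log_div h.ne' (hfγpos i).ne']; ring
  have hLsplit : ∑ i, b i * Real.log (fγ i)
      = ∑ i, fρ i * Real.log (fγ i) - ∑ i, x i * Real.log (fγ i) := by
    simp only [hb, ← Finset.sum_sub_distrib]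
    exact Finset.sum_congr rfl fun i _ => by ring
  have hiden : shannonEntropy fρ + ∑ i, b i * Real.log (fγ i)
      = (-∑ i, x i * Real.log (fγ i)) - classRelEnt fρ fγ := by
    rw [shannonEntropy, hD, hLsplit]; ring
  have hmain' := hmain
  rw [hL] at hmain'
  refine ⟨?_, ?_, ?_⟩
  · rw [abs_le]
    constructor
    · linarith [hmain, hsum2, hφ1, hεQ]
    · linarith [hmain, hsum1, hφ2, hε2]
  · intro hcond
    have h1 : ε * shannonEntropy fρ - ε * (-∑ i, b i * Real.log (fγ i))
        ≤ (1 + Q) * ε^2 := by linarith [hcond, hmain', hsum1, hφ2, hε2]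
    have h2 : (shannonEntropy fρ + ∑ i, b i * Real.log (fγ i)) * ε
        ≤ ((1 + Q) * ε) * ε := by linarith [h1, sq_nonneg ε]
    have h3 := le_of_mul_le_mul_right h2 hε
    linarith [hiden, h3]
  · intro hcond
    have hkey : shannonEntropy fρ + ∑ i, b i * Real.log (fγ i) ≤ -((1+Q) * ε) := by
      linarith [hiden, hcond]
    have h3 : ε * (shannonEntropy fρ + ∑ i, b i * Real.log (fγ i))
        ≤ ε * (-((1+Q) * ε)) := mul_le_mul_of_nonneg_left hkey hε.le
    linarith [hmain', hsum2, hφ1, h3, hεQ, sq_nonneg ε]
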